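/- arXiv:1602.00836 — 7 statements merged into one kernel-verified Lean document; each statement's English description precedes it below -/
import Mathlib

section
/- Let A be a nonsingular n×n matrix over K[x] that is row reduced (its row-wise leading coefficient matrix is invertible). Then the transpose of the adjugate adj(A)^T is also row reduced, and if η_i denotes the degree of the i-th row of A and η = η_1 + ... + η_n, then the i-th row of adj(A)^T has degree exactly η - η_i. -/
/-!
Give row `k` of a polynomial matrix the degree bound `d k`. Every term of the Leibniz expansion
of the determinant then has degree at most `∑ d`, and its coefficient of `x ^ (∑ d)` is the
corresponding term for the matrix of row-wise coefficients of `x ^ (d k)`. The `(j, i)` entry of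
the adjugate is the determinant of `A` with row `i` replaced by a unit vector, a row of degree
`0`; so row `i` of `adj(A)ᵀ` has degree at most `η - η_i`, and its coefficients of
`x ^ (η - η_i)` form row `i` of `adj(LM(A))ᵀ`. Since `LM(A)` is invertible, so is
`adj(LM(A))ᵀ`: none of its rows vanishes, so the bounds are attained, and it is the leading
matrix of `adj(A)ᵀ`.
-/

open Polynomial Matrix

/-- Degree of row `i` of a polynomial matrix: max of the natural degrees of its entries. -/
noncomputable def rowDegNat {K : Type*} [Field K] {n m : ℕ}
    (A : Matrix (Fin n) (Fin m) K[X]) (i : Fin n) : ℕ :=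
  Finset.univ.sup fun j => (A i j).natDegree

/-- Row-wise leading coefficient matrix. -/
noncomputable def leadingMatrix {K : Type*} [Field K] {n m : ℕ}
    (A : Matrix (Fin n) (Fin m) K[X]) : Matrix (Fin n) (Fin m) K :=
  Matrix.of fun i j => (A i j).coeff (rowDegNat A i)

namespace Polynomial

theorem coeff_prod_sum_of_natDegree_le {R ι : Type*} [CommSemiring R] (s : Finset ι)
    (f : ι → R[X]) (d : ι → ℕ) (h : ∀ i ∈ s, (f i).natDegree ≤ d i) :
    (∏ i ∈ s, f i).coeff (∑ i ∈ s, d i) = ∏ i ∈ s, (f i).coeff (d i) := by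
  induction s using Finset.cons_induction with
  | empty => simp
  | cons a s _ ih =>
    have hs : ∀ i ∈ s, (f i).natDegree ≤ d i := fun i hi => h i (Finset.mem_cons_of_mem hi)
    rw [Finset.prod_cons, Finset.sum_cons, Finset.prod_cons,
      coeff_mul_add_eq_of_natDegree_le (h a (Finset.mem_cons_self a s))
        ((natDegree_prod_le _ _).trans (Finset.sum_le_sum hs)), ih hs]

end Polynomial

theorem sum_update_zero_eq_sub {ι : Type*} [Fintype ι] [DecidableEq ι] (d : ι → ℕ) (i : ι) :
    ∑ k, Function.update d i 0 k = ∑ k, d k - d i := by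
  have hsplit := Finset.sum_sdiff (f := d) (Finset.subset_univ {i})
  rw [Finset.sum_singleton] at hsplit
  rw [Finset.sum_update_of_mem (Finset.mem_univ i), zero_add]
  omega

namespace Matrix

variable {R m n : Type*}

noncomputable def rowCoeff [Semiring R] (B : Matrix m n R[X]) (d : m → ℕ) : Matrix m n R :=
  of fun i j => (B i j).coeff (d i)

variable [CommRing R] [Fintype n] [DecidableEq n] {B : Matrix n n R[X]} {d : n → ℕ}

theorem natDegree_det_le_of_row_le (h : ∀ i j, (B i j).natDegree ≤ d i) :
    B.det.natDegree ≤ ∑ i, d i := by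
  rw [det_apply']
  refine natDegree_sum_le_of_forall_le _ _ fun σ _ => ?_
  refine natDegree_mul_le.trans ?_
  rw [natDegree_intCast, zero_add, ← Equiv.sum_comp σ d]
  exact (natDegree_prod_le _ _).trans (Finset.sum_le_sum fun i _ => h (σ i) i)

theorem coeff_det_of_row_le (h : ∀ i j, (B i j).natDegree ≤ d i) :
    B.det.coeff (∑ i, d i) = (B.rowCoeff d).det := by
  rw [det_apply', det_apply', finsetSum_coeff]
  refine Finset.sum_congr rfl fun σ _ => ?_
  rw [coeff_intCast_mul, ← Equiv.sum_comp σ d,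
    coeff_prod_sum_of_natDegree_le _ _ _ fun i _ => h (σ i) i]
  rfl

omit [Fintype n] in
theorem natDegree_updateRow_single_le (h : ∀ i j, (B i j).natDegree ≤ d i) (i j : n) :
    ∀ k l, ((B.updateRow i (Pi.single j 1)) k l).natDegree ≤ Function.update d i 0 k := by
  intro k l
  rcases eq_or_ne k i with rfl | hk
  · rw [updateRow_self, Function.update_self, Nat.le_zero]
    rcases eq_or_ne l j with rfl | hl
    · simp
    · simp [Pi.single_eq_of_ne hl]
  · rw [updateRow_ne hk, Function.update_of_ne hk]
    exact h k l

omit [Fintype n] in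
theorem rowCoeff_updateRow_single (i j : n) :
    (B.updateRow i (Pi.single j 1)).rowCoeff (Function.update d i 0) =
      (B.rowCoeff d).updateRow i (Pi.single j 1) := by
  ext k l
  rcases eq_or_ne k i with rfl | hk
  · rcases eq_or_ne l j with rfl | hl
    · simp [rowCoeff]
    · simp [rowCoeff, Pi.single_eq_of_ne hl]
  · simp [rowCoeff, hk]

theorem natDegree_adjugate_le_of_row_le (h : ∀ i j, (B i j).natDegree ≤ d i) (j i : n) :
    (B.adjugate j i).natDegree ≤ ∑ k, d k - d i := by
  rw [adjugate_apply, ← sum_update_zero_eq_sub]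
  exact natDegree_det_le_of_row_le (natDegree_updateRow_single_le h i j)

theorem coeff_adjugate_of_row_le (h : ∀ i j, (B i j).natDegree ≤ d i) (j i : n) :
    (B.adjugate j i).coeff (∑ k, d k - d i) = (B.rowCoeff d).adjugate j i := by
  rw [adjugate_apply, adjugate_apply, ← sum_update_zero_eq_sub,
    coeff_det_of_row_le (natDegree_updateRow_single_le h i j), rowCoeff_updateRow_single]

end Matrix

section RowDegree

variable {K : Type*} [Field K] {n m : ℕ}

theorem natDegree_le_rowDegNat (A : Matrix (Fin n) (Fin m) K[X]) (i : Fin n) (j : Fin m) :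
    (A i j).natDegree ≤ rowDegNat A i :=
  Finset.le_sup (f := fun k => (A i k).natDegree) (Finset.mem_univ j)

theorem leadingMatrix_eq_rowCoeff (A : Matrix (Fin n) (Fin m) K[X]) :
    leadingMatrix A = A.rowCoeff (rowDegNat A) :=
  rfl

theorem rowDegNat_eq_of_coeff_ne_zero {A : Matrix (Fin n) (Fin m) K[X]} {i : Fin n} {e : ℕ}
    (h : ∀ j, (A i j).natDegree ≤ e) (j : Fin m) (hj : (A i j).coeff e ≠ 0) :
    rowDegNat A i = e :=
  le_antisymm (Finset.sup_le fun j _ => h j)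
    ((le_natDegree_of_ne_zero hj).trans (natDegree_le_rowDegNat A i j))

end RowDegree

theorem stmt0_general {K : Type*} [Field K] {n : ℕ} (A : Matrix (Fin n) (Fin n) K[X])
    (hred : (leadingMatrix A).det ≠ 0) :
    (leadingMatrix (A.adjugate)ᵀ).det ≠ 0 ∧
      ∀ i, rowDegNat (A.adjugate)ᵀ i = (∑ j, rowDegNat A j) - rowDegNat A i := by
  have hbound := natDegree_le_rowDegNat A
  have hadj : (leadingMatrix A).adjugateᵀ.det ≠ 0 := by
    rw [det_transpose, det_adjugate]
    exact pow_ne_zero _ hred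
  have hdeg : ∀ i, rowDegNat A.adjugateᵀ i = ∑ j, rowDegNat A j - rowDegNat A i := by
    intro i
    obtain ⟨j, hj⟩ : ∃ j, (leadingMatrix A).adjugateᵀ i j ≠ 0 := by
      by_contra! h
      exact hadj (det_eq_zero_of_row_eq_zero i h)
    refine rowDegNat_eq_of_coeff_ne_zero (fun j => natDegree_adjugate_le_of_row_le hbound j i) j ?_
    rwa [transpose_apply, coeff_adjugate_of_row_le hbound]
  have hLM : leadingMatrix A.adjugateᵀ = (leadingMatrix A).adjugateᵀ := by
    ext i j
    rw [leadingMatrix_eq_rowCoeff, rowCoeff, of_apply, hdeg, transpose_apply,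
      coeff_adjugate_of_row_le hbound]
    rfl
  exact ⟨hLM ▸ hadj, hdeg⟩

/-- If `A` is a nonsingular row-reduced matrix over `K[x]`, then `adj(A)ᵀ` is row reduced,
and its `i`-th row has degree exactly `η - η_i` where `η_i` are the row degrees of `A`
and `η` their sum. -/
theorem stmt0 {K : Type*} [Field K] {n : ℕ} (A : Matrix (Fin n) (Fin n) K[X])
    (hA : A.det ≠ 0) (hred : (leadingMatrix A).det ≠ 0) :
    (leadingMatrix (A.adjugate)ᵀ).det ≠ 0 ∧
      ∀ i, rowDegNat (A.adjugate)ᵀ i = (∑ j, rowDegNat A j) - rowDegNat A i :=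
  stmt0_general A hred
end

section
/- Let d ≥ 0 and B̂ the (n+1)×(n+1) matrix over K[x] with first column (1, S_1,...,S_n)^T, x^d·I_n in the lower-right block, and zeros in the remainder of the first row. Let Â^T be the transpose of the matrix Â with first row (x^d, -S_1,...,-S_n) and identity lower-right block. Then the K[x]-row space of Â^T is exactly the set of order-d approximants of B̂, i.e. every vector p ∈ K[x]^{1×(n+1)} with p·B̂ ≡ 0 (mod x^d) is a K[x]-linear combination of the rows of Â^T, and conversely. -/
open Polynomial Matrix

/-- `Â`: first row `(x^d, -S_1, ..., -S_n)`, identity in the lower-right block. -/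
noncomputable def Ahat {K : Type*} [Field K] {n : ℕ} (d : ℕ) (S : Fin n → K[X]) :
    Matrix (Fin (n + 1)) (Fin (n + 1)) K[X] :=
  Matrix.of (Fin.cons (Fin.cons ((X : K[X]) ^ d) (fun j => -S j))
    (fun i => Fin.cons 0 (fun j => if i = j then (1 : K[X]) else 0)))

/-- `B̂`: first column `(1, S_1, ..., S_n)ᵀ`, `x^d·I_n` in the lower-right block,
zeros elsewhere in the first row. -/
noncomputable def Bhat {K : Type*} [Field K] {n : ℕ} (d : ℕ) (S : Fin n → K[X]) :
    Matrix (Fin (n + 1)) (Fin (n + 1)) K[X] :=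
  Matrix.of (Fin.cons (Fin.cons 1 (fun _ => 0))
    (fun i => Fin.cons (S i) (fun j => if i = j then (X : K[X]) ^ d else 0)))

/-! Both sides of the equivalence reduce to the single condition `x^d ∣ p₀ + ∑ₖ pₖ Sₖ`:
the columns of `B̂` other than the first are multiples of `x^d`, and `Âᵀ` is the identity
outside its first column, so a vector lies in its row space as soon as its first entry can be
corrected by a multiple of `x^d`. -/

section

variable {K : Type*} [Field K] {n : ℕ} (d : ℕ) (S : Fin n → K[X])

lemma vecMul_Bhat_zero (p : Fin (n + 1) → K[X]) :
    (p ᵥ* Bhat d S) 0 = p 0 + ∑ k, p k.succ * S k := by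
  simp [Bhat, vecMul, dotProduct, Fin.sum_univ_succ]

lemma vecMul_Bhat_succ (p : Fin (n + 1) → K[X]) (j : Fin n) :
    (p ᵥ* Bhat d S) j.succ = p j.succ * X ^ d := by
  simp [Bhat, vecMul, dotProduct, Fin.sum_univ_succ, mul_ite]

lemma vecMul_transpose_Ahat_zero (u : Fin (n + 1) → K[X]) :
    (u ᵥ* (Ahat d S)ᵀ) 0 = u 0 * X ^ d - ∑ k, u k.succ * S k := by
  simp [Ahat, vecMul, dotProduct, Fin.sum_univ_succ, sub_eq_add_neg]

lemma vecMul_transpose_Ahat_succ (u : Fin (n + 1) → K[X]) (j : Fin n) :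
    (u ᵥ* (Ahat d S)ᵀ) j.succ = u j.succ := by
  simp [Ahat, vecMul, dotProduct, Fin.sum_univ_succ, mul_ite]

lemma approximant_Bhat_iff (p : Fin (n + 1) → K[X]) :
    (∀ j, (X : K[X]) ^ d ∣ (p ᵥ* Bhat d S) j) ↔ (X : K[X]) ^ d ∣ p 0 + ∑ k, p k.succ * S k := by
  refine ⟨fun h => vecMul_Bhat_zero d S p ▸ h 0, fun h j => ?_⟩
  cases j using Fin.cases with
  | zero => rwa [vecMul_Bhat_zero]
  | succ j => rw [vecMul_Bhat_succ]; exact dvd_mul_left _ _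

lemma exists_eq_vecMul_transpose_Ahat_iff (p : Fin (n + 1) → K[X]) :
    (∃ u, p = u ᵥ* (Ahat d S)ᵀ) ↔ (X : K[X]) ^ d ∣ p 0 + ∑ k, p k.succ * S k := by
  constructor
  · rintro ⟨u, rfl⟩
    simp only [vecMul_transpose_Ahat_zero, vecMul_transpose_Ahat_succ, sub_add_cancel]
    exact dvd_mul_left _ _
  · rintro ⟨c, hc⟩
    refine ⟨Fin.cons c (fun k => p k.succ), funext fun i => ?_⟩
    cases i using Fin.cases with
    | zero =>
      rw [vecMul_transpose_Ahat_zero]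
      simp only [Fin.cons_zero, Fin.cons_succ]
      linear_combination hc
    | succ j => rw [vecMul_transpose_Ahat_succ, Fin.cons_succ]

end

/-- The `K[x]`-row space of `Âᵀ` is exactly the set of order-`d` approximants of `B̂`. -/
theorem stmt5 {K : Type*} [Field K] {n : ℕ} (d : ℕ) (S : Fin n → K[X]) :
    ∀ p : Fin (n + 1) → K[X],
      (∀ j, (X : K[X]) ^ d ∣ (p ᵥ* Bhat d S) j) ↔
      (∃ u : Fin (n + 1) → K[X], p = u ᵥ* (Ahat d S)ᵀ) := fun p =>
  (approximant_Bhat_iff d S p).trans (exists_eq_vecMul_transpose_Ahat_iff d S p).symm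
end

section
/- Let G be an approximant basis of order d of a matrix A ∈ K[x]^{n×m} of degree at most d, computed such that the set of order-d approximants of A equals the K[x]-row space of G. Then det(G) = c·x^D for some nonzero constant c ∈ K and some integer D with 0 ≤ D ≤ m·d. -/
open Polynomial Matrix

/-!
The order-`d` approximants are the first components of the left kernel of `[A; x^d I]`. Every row
of `G` is an approximant, so `G A = x^d B`, and the rows of `[G | -B]` form a basis of that kernel.
A left kernel is saturated, so over the PID `K[x]` these rows extend to a unimodular matrix `W`.
Then `W [[I, A], [0, x^d I]]` is block lower triangular with `G` in the corner, so `det G` divides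
`det W · x^{md}`, a unit times `x^{md}`.
-/

theorem Module.Basis.exists_extension_of_basis_ker {R M P ι : Type*} [Ring R] [AddCommGroup M]
    [AddCommGroup P] [Module R M] [Module R P] [Module.Free R P] (g : M →ₗ[R] P)
    (hg : Function.Surjective g) (v : Module.Basis ι R (LinearMap.ker g)) :
    ∃ b : Module.Basis (ι ⊕ Module.Free.ChooseBasisIndex R P) R M,
      ∀ i, b (Sum.inl i) = v i := by
  obtain ⟨l, hl⟩ := g.exists_rightInverse_of_surjective (LinearMap.range_eq_top.2 hg)
  let e :=
    g.exact_subtype_ker_map.splitSurjectiveEquiv (LinearMap.ker g).injective_subtype ⟨l, hl⟩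
  refine ⟨(v.prod (Module.Free.chooseBasis R P)).map e.1.symm, fun i => ?_⟩
  simpa only [Module.Basis.map_apply, Module.Basis.prod_apply, LinearMap.coe_inl,
    Sum.elim_inl, LinearMap.coe_comp, LinearEquiv.coe_coe, Function.comp_apply,
    Submodule.subtype_apply] using (LinearMap.congr_fun e.2.1 (v i)).symm

theorem Matrix.vecMulLinear_fromCols_injective {R ι κ : Type*} [CommRing R] [IsDomain R]
    [Fintype ι] [DecidableEq ι] {G : Matrix ι ι R} (hG : G.det ≠ 0) (B : Matrix ι κ R) :
    Function.Injective (fromCols G B).vecMulLinear := by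
  refine (injective_iff_map_eq_zero _).2 fun u hu => eq_zero_of_vecMul_eq_zero hG ?_
  rw [vecMulLinear_apply, vecMul_fromCols] at hu
  exact funext fun i => congrFun hu (Sum.inl i)

theorem Matrix.exists_isUnit_det_fromRows_of_ker_eq_range {R : Type*} [CommRing R] [IsDomain R]
    [IsPrincipalIdealRing R] {ι ι' κ : Type*} [Fintype ι] [Fintype ι'] [DecidableEq ι]
    [DecidableEq ι'] (N : Matrix ι (ι ⊕ ι') R) (C : Matrix (ι ⊕ ι') κ R)
    (hN : Function.Injective N.vecMulLinear)
    (hker : LinearMap.ker C.vecMulLinear = LinearMap.range N.vecMulLinear) :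
    ∃ N' : Matrix ι' (ι ⊕ ι') R, IsUnit (fromRows N N').det := by
  let g := C.vecMulLinear.rangeRestrict
  have hgker : LinearMap.ker g = LinearMap.range N.vecMulLinear := by
    rw [LinearMap.ker_rangeRestrict, hker]
  let v : Module.Basis ι R (LinearMap.ker g) := (Pi.basisFun R ι).map
    (LinearEquiv.ofInjective N.vecMulLinear hN ≪≫ₗ LinearEquiv.ofEq _ _ hgker.symm)
  obtain ⟨b, hb⟩ :=
    Module.Basis.exists_extension_of_basis_ker g C.vecMulLinear.surjective_rangeRestrict v
  have hcard := Fintype.card_congr (b.indexEquiv (Pi.basisFun R (ι ⊕ ι')))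
  simp only [Fintype.card_sum] at hcard
  let e : Module.Free.ChooseBasisIndex R (LinearMap.range C.vecMulLinear) ≃ ι' :=
    Fintype.equivOfCardEq (by omega)
  let b' := b.reindex (Equiv.sumCongr (Equiv.refl ι) e)
  have hb'N : ∀ i, b' (Sum.inl i) = N i := fun i => by
    simp [b', v, hb, row_def]
  refine ⟨fun k => b' (Sum.inr k), ?_⟩
  have hrows : fromRows N (fun k => b' (Sum.inr k)) = Matrix.of b' := by
    ext (i | k) j
    · exact congrFun (hb'N i).symm j
    · rfl
  rw [hrows, ← Pi.basisFun_det_apply, ← Module.Basis.is_basis_iff_det]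
  exact ⟨b'.linearIndependent, b'.span_eq⟩

theorem Matrix.ker_vecMulLinear_fromRows_eq_range {R ι κ : Type*} [CommRing R] [IsDomain R]
    [Fintype ι] [Fintype κ] [DecidableEq κ] {a : R} (ha : a ≠ 0) {A : Matrix ι κ R}
    {G : Matrix ι ι R} {B : Matrix ι κ R} (hB : G * A = a • B)
    (happrox : ∀ p : ι → R, (∀ j, a ∣ (p ᵥ* A) j) → ∃ u, p = u ᵥ* G) :
    LinearMap.ker (fromRows A (a • 1 : Matrix κ κ R)).vecMulLinear =
      LinearMap.range (fromCols G (-B)).vecMulLinear := by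
  ext v
  rw [← Sum.elim_comp_inl_inr v]
  generalize v ∘ Sum.inl = p, v ∘ Sum.inr = q
  simp only [LinearMap.mem_ker, LinearMap.mem_range, vecMulLinear_apply, sumElim_vecMul_fromRows,
    vecMul_smul, vecMul_one, vecMul_fromCols, Sum.elim_eq_iff]
  constructor
  · intro h
    have hpA : p ᵥ* A = -(a • q) := eq_neg_of_add_eq_zero_left h
    obtain ⟨u, rfl⟩ := happrox p fun j => ⟨-q j, by simp [hpA]⟩
    refine ⟨u, rfl, ?_⟩
    rw [vecMul_vecMul, hB, vecMul_smul, ← smul_neg] at hpA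
    rw [vecMul_neg, smul_right_injective _ ha hpA, neg_neg]
  · rintro ⟨u, rfl, rfl⟩
    rw [vecMul_vecMul, vecMul_neg, hB, vecMul_smul, smul_neg, add_neg_cancel]

theorem Matrix.det_dvd_pow_of_isUnit_det_fromRows {R ι κ : Type*} [CommRing R] [Fintype ι]
    [Fintype κ] [DecidableEq ι] [DecidableEq κ] {a : R} {A : Matrix ι κ R} {G : Matrix ι ι R}
    {B : Matrix ι κ R} (hB : G * A = a • B) {N' : Matrix κ (ι ⊕ κ) R}
    (hW : IsUnit (fromRows (fromCols G (-B)) N').det) :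
    G.det ∣ a ^ Fintype.card κ := by
  set Y : Matrix (ι ⊕ κ) (ι ⊕ κ) R := fromBlocks 1 A 0 (a • 1)
  have hY : Y.det = a ^ Fintype.card κ := by
    rw [det_fromBlocks_zero₂₁, det_one, one_mul, det_smul, det_one, mul_one]
  have hWY : fromRows (fromCols G (-B)) N' * Y =
      fromBlocks G 0 (N' * Y).toCols₁ (N' * Y).toCols₂ := by
    rw [← fromRows_fromCols_eq_fromBlocks, fromCols_toCols, fromRows_mul, fromCols_mul_fromBlocks]
    simp only [Matrix.mul_one, Matrix.mul_zero, add_zero, hB, Matrix.mul_smul, smul_neg,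
      add_neg_cancel]
  have hdet := det_mul (fromRows (fromCols G (-B)) N') Y
  rw [hWY, det_fromBlocks_zero₁₂, hY] at hdet
  exact hW.dvd_mul_left.1 ⟨_, hdet.symm⟩

theorem Polynomial.exists_C_mul_X_pow_of_dvd_X_pow {K : Type*} [Field K] {p : K[X]} {k : ℕ}
    (h : p ∣ X ^ k) : ∃ (c : K) (D : ℕ), c ≠ 0 ∧ D ≤ k ∧ p = C c * X ^ D := by
  obtain ⟨D, hD, u, hu⟩ := (dvd_prime_pow prime_X k).1 h
  obtain ⟨c, hc, hcu⟩ := Polynomial.isUnit_iff.1 (u⁻¹).isUnit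
  refine ⟨c, D, hc.ne_zero, hD, ?_⟩
  rw [hcu, ← hu, mul_comm, Units.mul_inv_cancel_right]

theorem stmt6_general {K : Type*} [Field K] {n m d : ℕ}
    (A : Matrix (Fin n) (Fin m) K[X])
    (G : Matrix (Fin n) (Fin n) K[X]) (hG : G.det ≠ 0)
    (hspan : ∀ p : Fin n → K[X],
      (∃ u : Fin n → K[X], p = u ᵥ* G) ↔ ∀ j, (X : K[X]) ^ d ∣ (p ᵥ* A) j) :
    ∃ (c : K) (D : ℕ), c ≠ 0 ∧ D ≤ m * d ∧ G.det = C c * X ^ D := by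
  classical
  obtain ⟨B, hB⟩ : ∃ B, G * A = (X ^ d : K[X]) • B := by
    choose B hB using fun i => (hspan (G i)).1 ⟨Pi.single i 1, (single_one_vecMul i G).symm⟩
    exact ⟨of B, Matrix.ext fun i j => hB i j⟩
  obtain ⟨N', hN'⟩ := exists_isUnit_det_fromRows_of_ker_eq_range _ _
    (vecMulLinear_fromCols_injective hG (-B))
    (ker_vecMulLinear_fromRows_eq_range (pow_ne_zero d X_ne_zero) hB fun p => (hspan p).2)
  have hdvd := det_dvd_pow_of_isUnit_det_fromRows hB hN'
  rw [Fintype.card_fin, ← pow_mul, mul_comm] at hdvd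
  exact exists_C_mul_X_pow_of_dvd_X_pow hdvd

/-- If `G` is an order-`d` approximant basis of `A ∈ K[x]^{n×m}` of degree at most `d`
(nonsingular, and its row space equals the module of order-`d` approximants of `A`),
then `det G = c·x^D` for a nonzero constant `c` and some `D ≤ m·d`. -/
theorem stmt6 {K : Type*} [Field K] {n m d : ℕ}
    (A : Matrix (Fin n) (Fin m) K[X]) (hdegA : ∀ i j, (A i j).degree ≤ (d : WithBot ℕ))
    (G : Matrix (Fin n) (Fin n) K[X]) (hG : G.det ≠ 0)
    (hspan : ∀ p : Fin n → K[X],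
      (∃ u : Fin n → K[X], p = u ᵥ* G) ↔ ∀ j, (X : K[X]) ^ d ∣ (p ᵥ* A) j) :
    ∃ (c : K) (D : ℕ), c ≠ 0 ∧ D ≤ m * d ∧ G.det = C c * X ^ D :=
  stmt6_general A G hG hspan
end

section
/- Let A = [A_1 | A_2] be a block column decomposition of A ∈ K[x]^{n×m}. If F_1 ∈ K[x]^{n×n} is an approximant basis of order d for A_1 (its row space equals the module of order-d approximants of A_1), and F_2 ∈ K[x]^{n×n} is an approximant basis of order d for F_1·A_2, then F_2·F_1 is an approximant basis of order d for A, i.e. the row space of F_2·F_1 equals the module of all p with p·A ≡ 0 mod x^d. -/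
open Polynomial Matrix

theorem exists_vecMul_mul_iff {R : Type*} [NonUnitalSemiring R] {ι κ μ : Type*}
    [Fintype κ] [Fintype μ] (F₁ : Matrix κ ι R) (F₂ : Matrix μ κ R) (P Q : (ι → R) → Prop)
    (h₁ : ∀ p, (∃ u, p = u ᵥ* F₁) ↔ P p) (h₂ : ∀ v, (∃ u, v = u ᵥ* F₂) ↔ Q (v ᵥ* F₁))
    (p : ι → R) : (∃ u, p = u ᵥ* (F₂ * F₁)) ↔ P p ∧ Q p := by
  constructor
  · rintro ⟨u, rfl⟩
    rw [← vecMul_vecMul]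
    exact ⟨(h₁ _).mp ⟨_, rfl⟩, (h₂ _).mp ⟨u, rfl⟩⟩
  · rintro ⟨hP, hQ⟩
    obtain ⟨v, rfl⟩ := (h₁ p).mpr hP
    obtain ⟨u, rfl⟩ := (h₂ v).mpr hQ
    exact ⟨u, vecMul_vecMul u F₂ F₁⟩

/-- Recursive computation of approximant bases: if `F₁` is an order-`d` approximant basis
of `A₁` and `F₂` is an order-`d` approximant basis of `F₁·A₂`, then `F₂·F₁` is an order-`d`
approximant basis of `A = [A₁ | A₂]`, i.e. its row space is exactly the module of vectors
`p` with `p·A₁ ≡ 0` and `p·A₂ ≡ 0 (mod x^d)`. -/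
theorem stmt7 {K : Type*} [Field K] {n m₁ m₂ d : ℕ}
    (A₁ : Matrix (Fin n) (Fin m₁) K[X]) (A₂ : Matrix (Fin n) (Fin m₂) K[X])
    (F₁ F₂ : Matrix (Fin n) (Fin n) K[X])
    (hF₁ : F₁.det ≠ 0)
    (hF₁span : ∀ p : Fin n → K[X],
      (∃ u : Fin n → K[X], p = u ᵥ* F₁) ↔ ∀ j, (X : K[X]) ^ d ∣ (p ᵥ* A₁) j)
    (hF₂ : F₂.det ≠ 0)
    (hF₂span : ∀ p : Fin n → K[X],
      (∃ u : Fin n → K[X], p = u ᵥ* F₂) ↔ ∀ j, (X : K[X]) ^ d ∣ (p ᵥ* (F₁ * A₂)) j) :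
    (F₂ * F₁).det ≠ 0 ∧
    ∀ p : Fin n → K[X],
      (∃ u : Fin n → K[X], p = u ᵥ* (F₂ * F₁)) ↔
        ((∀ j, (X : K[X]) ^ d ∣ (p ᵥ* A₁) j) ∧ (∀ j, (X : K[X]) ^ d ∣ (p ᵥ* A₂) j)) := by
  refine ⟨by simpa only [det_mul] using mul_ne_zero hF₂ hF₁, ?_⟩
  refine exists_vecMul_mul_iff F₁ F₂ _ _ hF₁span fun v => ?_
  simpa only [vecMul_vecMul] using hF₂span v
end

section
/- With the hypotheses of the previous setting (deg S_i < deg g_i, N_i ≤ deg g_i, 1 ≤ N_0, d = N_0 + max_i deg g_i - 1), a vector (λ, φ_1,...,φ_n) with deg λ < N_0 and deg φ_i < N_i satisfies λ·S_i ≡ φ_i (mod g_i) for all i if and only if there exist q_1,...,q_n ∈ K[x] with deg q_i ≤ N_0 - 2 such that the extended vector (λ, φ_1,...,φ_n, q_1,...,q_n) is an order-d approximant of the (2n+1)×n matrix H whose rows are: first row (-S_1,...,-S_n), then the n×n identity, then the diagonal matrix diag(g_1,...,g_n). -/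
/-!
The `j`-th entry of `(λ, φ, q) ᵥ* H` is `q_j g_j - (λ S_j - φ_j)`, and under the degree bounds
both terms have degree `< deg g_j + N₀ - 1 ≤ d`. Hence the entry is divisible by `X ^ d` only if it
vanishes, i.e. `λ S_j - φ_j = q_j g_j`; conversely the same bound forces the quotient of
`λ S_j - φ_j` by `g_j` to have degree `< N₀ - 1`.
-/

open Polynomial Matrix

/-- The matrix `H` with first row `(-S_1,...,-S_n)`, then the identity, then
`diag(g_1,...,g_n)`. -/
noncomputable def Hmat {K : Type*} [Field K] {n : ℕ} (S g : Fin n → K[X]) :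
    Matrix (Unit ⊕ Fin n ⊕ Fin n) (Fin n) K[X] :=
  Matrix.of (Sum.elim (fun (_ : Unit) j => -S j)
    (Sum.elim (fun i j => if i = j then (1 : K[X]) else 0)
              (fun i j => if i = j then g i else 0)))

namespace Polynomial

section Semiring

variable {R : Type*} [Semiring R]

theorem degree_mul_lt_of_degree_lt {p q : R[X]} {a b : ℕ} (hp : p.degree < a)
    (hq : q.degree < b) : (p * q).degree < ↑(a + b - 1) := by
  rcases eq_or_ne p 0 with rfl | hp0
  · simp
  rcases eq_or_ne q 0 with rfl | hq0
  · simp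
  rw [degree_eq_natDegree hp0, Nat.cast_lt] at hp
  rw [degree_eq_natDegree hq0, Nat.cast_lt] at hq
  refine (degree_mul_le p q).trans_lt ?_
  rw [degree_eq_natDegree hp0, degree_eq_natDegree hq0, ← Nat.cast_add, Nat.cast_lt]
  omega

variable [NoZeroDivisors R]

theorem degree_lt_of_degree_mul_lt {g c : R[X]} {m : ℕ} (hg : g ≠ 0)
    (h : (g * c).degree < ↑(g.natDegree + m)) : c.degree < m := by
  rcases eq_or_ne c 0 with rfl | hc0
  · simp
  rw [degree_mul, degree_eq_natDegree hg, degree_eq_natDegree hc0, ← Nat.cast_add,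
    Nat.cast_lt] at h
  rw [degree_eq_natDegree hc0, Nat.cast_lt]
  omega

theorem eq_zero_of_X_pow_dvd_of_degree_lt [Nontrivial R] {p : R[X]} {d : ℕ}
    (h : X ^ d ∣ p) (hp : p.degree < d) : p = 0 :=
  eq_zero_of_dvd_of_degree_lt h (by rwa [degree_X_pow])

end Semiring

end Polynomial

section Approximant

variable {K : Type*} [Field K]

theorem vecMul_Hmat_apply {n : ℕ} (S g : Fin n → K[X]) (lam : K[X]) (φ q : Fin n → K[X])
    (j : Fin n) :
    (Sum.elim (fun _ : Unit => lam) (Sum.elim φ q) ᵥ* Hmat S g) j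
      = q j * g j - (lam * S j - φ j) := by
  simp only [vecMul, dotProduct, Hmat, Fintype.sum_sum_type, of_apply, Sum.elim_inl,
    Sum.elim_inr, mul_ite, mul_one, mul_zero, Finset.sum_ite_eq', Finset.mem_univ, if_true,
    Finset.univ_unique, Finset.sum_singleton]
  ring

theorem degree_mul_sub_lt {lam S φ g : K[X]} {N0 Ni : ℕ} (hN0 : 1 ≤ N0)
    (hlam : lam.degree < N0) (hS : S.degree < g.degree) (hφ : φ.degree < Ni)
    (hNi : Ni ≤ g.natDegree) : (lam * S - φ).degree < ↑(g.natDegree + (N0 - 1)) := by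
  have hlamS : (lam * S).degree < ↑(N0 + g.natDegree - 1) :=
    degree_mul_lt_of_degree_lt hlam (hS.trans_le degree_le_natDegree)
  refine (degree_sub_le _ _).trans_lt (max_lt ?_ ?_)
  · exact hlamS.trans_le (by exact_mod_cast (by omega))
  · exact hφ.trans_le (by exact_mod_cast (by omega))

end Approximant

/-- A vector `(λ, φ)` with the given degree bounds solves `λ·S_i ≡ φ_i (mod g_i)` for all
`i` if and only if it extends by quotients `q_i` of degree `≤ N₀ - 2` to an order-`d`
approximant of `H`, where `d = N₀ + max_i deg g_i - 1`. -/
theorem stmt9 {K : Type*} [Field K] {n : ℕ} (S g : Fin n → K[X])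
    (hdeg : ∀ i, (S i).degree < (g i).degree)
    (N0 : ℕ) (N : Fin n → ℕ) (hN0 : 1 ≤ N0)
    (hN : ∀ i, N i ≤ (g i).natDegree)
    (d : ℕ) (hd : d = N0 + (Finset.univ.sup fun i => (g i).natDegree) - 1)
    (lam : K[X]) (φ : Fin n → K[X])
    (hlam : lam.degree < (N0 : WithBot ℕ))
    (hφ : ∀ i, (φ i).degree < (N i : WithBot ℕ)) :
    (∀ i, g i ∣ lam * S i - φ i) ↔
      ∃ q : Fin n → K[X], (∀ i, (q i).degree < ((N0 - 1 : ℕ) : WithBot ℕ)) ∧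
        ∀ j, (X : K[X]) ^ d ∣
          ((Sum.elim (fun _ : Unit => lam) (Sum.elim φ q)) ᵥ* Hmat S g) j := by
  have hg : ∀ i, g i ≠ 0 := fun i h => by simpa [h] using hdeg i
  have hkey i := degree_mul_sub_lt hN0 hlam (hdeg i) (hφ i) (hN i)
  simp_rw [vecMul_Hmat_apply]
  constructor
  · intro h
    choose q hq using h
    refine ⟨q, fun i => degree_lt_of_degree_mul_lt (hg i) (hq i ▸ hkey i), fun j => ?_⟩
    rw [hq j, mul_comm, sub_self]
    exact dvd_zero _
  · rintro ⟨q, hq, hdvd⟩ i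
    have hgd : (g i).natDegree + (N0 - 1) ≤ d := by
      have := Finset.le_sup (f := fun i => (g i).natDegree) (Finset.mem_univ i)
      omega
    have hqg : (q i * g i).degree < ↑((g i).natDegree + (N0 - 1)) :=
      (degree_mul_lt_of_degree_lt (hq i) (degree_le_natDegree.trans_lt
        (Nat.cast_lt.2 (Nat.lt_succ_self _)))).trans_le (by exact_mod_cast (by omega))
    have hlt : (q i * g i - (lam * S i - φ i)).degree < d :=
      ((degree_sub_le _ _).trans_lt (max_lt hqg (hkey i))).trans_le (by exact_mod_cast hgd)
    have hzero := eq_zero_of_X_pow_dvd_of_degree_lt (hdvd i) hlt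
    exact ⟨q i, by linear_combination -hzero⟩
end

section
/- Let s = (s_1,...,s_n) ∈ ℤ^n be a shift and A ∈ K[x]^{n×m} a matrix with full row rank that is s-row reduced. Then for every nonzero v = (v_1,...,v_n) ∈ K[x]^{1×n}, the s-degree of v·A equals max over i with v_i ≠ 0 of (deg v_i + rowdeg_s(row i of A)). (Shifted predictable degree property.) -/
/-!
Let `D = max_i (deg v_i + ds_i)`. Each summand `v_i · A_i · X ^ s` has degree at most `D`, and its
coefficient of `X ^ D` is `lc(v_i)` times the `i`-th row of the `s`-leading matrix when
`deg v_i + ds_i = D`, and `0` otherwise. So the `X ^ D`-coefficient of `v · A · X ^ s` is a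
combination of the rows of the leading matrix with at least one nonzero coefficient, hence nonzero.
-/

open Polynomial Matrix Classical

noncomputable section

def zdeg {K : Type*} [Field K] (p : K[X]) : WithBot ℤ :=
  p.degree.map fun a : ℕ => (a : ℤ)

def sdeg {K : Type*} [Field K] {m : ℕ} (s : Fin m → ℤ) (w : Fin m → K[X]) : WithBot ℤ :=
  Finset.univ.sup fun j => zdeg (w j) + (s j : WithBot ℤ)

theorem WithBot.add_coe_le_coe_iff_le_sub (a : WithBot ℤ) (c d : ℤ) :
    a + c ≤ d ↔ a ≤ ((d - c : ℤ) : WithBot ℤ) := by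
  induction a with
  | bot => simp
  | coe x => norm_cast; omega

section Polynomial

variable {R : Type*} [Semiring R]

def intCoeff (p : R[X]) (e : ℤ) : R :=
  if e < 0 then 0 else p.coeff e.toNat

theorem intCoeff_natCast (p : R[X]) (n : ℕ) : intCoeff p n = p.coeff n := by
  simp [intCoeff]

theorem intCoeff_sum {ι : Type*} (t : Finset ι) (f : ι → R[X]) (e : ℤ) :
    intCoeff (∑ i ∈ t, f i) e = ∑ i ∈ t, intCoeff (f i) e := by
  unfold intCoeff; split_ifs <;> simp

/-- The coefficient of `X ^ d` in the row vector `w · X ^ s`; thus the rows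
`shiftedCoeff s (A i) (ds i)` form the `s`-leading matrix of `A` when `ds` are its `s`-row degrees. -/
def shiftedCoeff {ι : Type*} (s : ι → ℤ) (w : ι → R[X]) (d : ℤ) : ι → R :=
  fun j => intCoeff (w j) (d - s j)

theorem shiftedCoeff_sum {ι κ : Type*} (s : ι → ℤ) (t : Finset κ) (f : κ → ι → R[X]) (d : ℤ) :
    shiftedCoeff s (∑ i ∈ t, f i) d = ∑ i ∈ t, shiftedCoeff s (f i) d := by
  funext j
  simp only [shiftedCoeff, Finset.sum_apply, intCoeff_sum]

end Polynomial

section Field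

variable {K : Type*} [Field K]

theorem zdeg_eq_natDegree {p : K[X]} (hp : p ≠ 0) : zdeg p = (p.natDegree : ℤ) := by
  rw [zdeg, degree_eq_natDegree hp]; rfl

theorem zdeg_mul (p q : K[X]) : zdeg (p * q) = zdeg p + zdeg q := by
  by_cases hp : p = 0
  · simp [hp, zdeg]
  by_cases hq : q = 0
  · simp [hq, zdeg]
  rw [zdeg_eq_natDegree (mul_ne_zero hp hq), zdeg_eq_natDegree hp, zdeg_eq_natDegree hq,
    natDegree_mul hp hq]
  norm_cast

theorem le_zdeg_of_intCoeff_ne_zero {p : K[X]} {e : ℤ} (h : intCoeff p e ≠ 0) : e ≤ zdeg p := by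
  unfold intCoeff at h
  split_ifs at h with he
  · exact absurd rfl h
  · have hp : p ≠ 0 := by rintro rfl; simp at h
    rw [zdeg_eq_natDegree hp, WithBot.coe_le_coe]
    have := le_natDegree_of_ne_zero h
    omega

theorem intCoeff_eq_zero_of_zdeg_lt {p : K[X]} {e : ℤ} (h : zdeg p < e) : intCoeff p e = 0 := by
  by_contra h'
  exact (le_zdeg_of_intCoeff_ne_zero h').not_gt h

theorem intCoeff_mul_of_zdeg_le {p q : K[X]} {e d : ℤ} (hq : zdeg q ≤ e) (hd : zdeg p + e ≤ d) :
    intCoeff (p * q) d = if zdeg p + e = d then p.leadingCoeff * intCoeff q e else 0 := by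
  split_ifs with h
  · by_cases hq0 : q = 0
    · simp [hq0, intCoeff]
    have hp : p ≠ 0 := by rintro rfl; simp [zdeg] at h
    rw [zdeg_eq_natDegree hq0, WithBot.coe_le_coe] at hq
    rw [zdeg_eq_natDegree hp] at h
    norm_cast at h
    lift e to ℕ using (Int.natCast_nonneg _).trans hq
    subst h
    rw [← Nat.cast_add, intCoeff_natCast, intCoeff_natCast,
      coeff_mul_add_eq_of_natDegree_le le_rfl (by exact_mod_cast hq), coeff_natDegree]
  · refine intCoeff_eq_zero_of_zdeg_lt ?_
    calc zdeg (p * q) = zdeg p + zdeg q := zdeg_mul p q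
      _ ≤ zdeg p + e := by gcongr
      _ < d := lt_of_le_of_ne hd h

variable {m : ℕ} {s : Fin m → ℤ} {w : Fin m → K[X]}

theorem le_sdeg_of_shiftedCoeff_ne_zero {d : ℤ} (h : shiftedCoeff s w d ≠ 0) : d ≤ sdeg s w := by
  obtain ⟨j, hj⟩ := Function.ne_iff.mp h
  calc (d : WithBot ℤ) = ((d - s j : ℤ) : WithBot ℤ) + s j := by norm_cast; rw [sub_add_cancel]
    _ ≤ zdeg (w j) + s j := by gcongr; exact le_zdeg_of_intCoeff_ne_zero hj
    _ ≤ sdeg s w := Finset.le_sup (f := fun j => zdeg (w j) + (s j : WithBot ℤ)) (Finset.mem_univ j)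

theorem sdeg_le_of_forall_lt_shiftedCoeff_eq_zero {d : ℤ}
    (h : ∀ t, d < t → shiftedCoeff s w t = 0) : sdeg s w ≤ d := by
  refine Finset.sup_le fun j _ => ?_
  rcases eq_or_ne (w j) 0 with hj | hj
  · simp [hj, zdeg]
  rw [zdeg_eq_natDegree hj, ← WithBot.coe_add, WithBot.coe_le_coe]
  by_contra! hlt
  have hcoeff := congrFun (h _ hlt) j
  simp only [shiftedCoeff, add_sub_cancel_right, intCoeff_natCast, coeff_natDegree] at hcoeff
  exact hj (leadingCoeff_eq_zero.mp hcoeff)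

theorem shiftedCoeff_smul_of_sdeg_le {p : K[X]} {e d : ℤ} (hw : sdeg s w ≤ e)
    (hd : zdeg p + e ≤ d) :
    shiftedCoeff s (p • w) d = if zdeg p + e = d then p.leadingCoeff • shiftedCoeff s w e else 0 := by
  rcases eq_or_ne p 0 with rfl | hp
  · funext j
    simp [shiftedCoeff, intCoeff, zdeg]
  have hcoeff : ∀ j, shiftedCoeff s (p • w) d j =
      if (p.natDegree : ℤ) + e = d then p.leadingCoeff * shiftedCoeff s w e j else 0 := by
    intro j
    have hj : zdeg (w j) ≤ ↑(e - s j) := (WithBot.add_coe_le_coe_iff_le_sub _ _ _).mp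
      ((Finset.le_sup (f := fun j => zdeg (w j) + (s j : WithBot ℤ)) (Finset.mem_univ j)).trans hw)
    have hdj : zdeg p + ↑(e - s j) ≤ ↑(d - s j) := by
      rw [WithBot.add_coe_le_coe_iff_le_sub, sub_sub_sub_cancel_right,
        ← WithBot.add_coe_le_coe_iff_le_sub]
      exact hd
    rw [shiftedCoeff, Pi.smul_apply, smul_eq_mul, intCoeff_mul_of_zdeg_le hj hdj,
      zdeg_eq_natDegree hp]
    norm_cast
    simp only [← add_sub_assoc, sub_left_inj, shiftedCoeff]
  have hcond : zdeg p + e = d ↔ (p.natDegree : ℤ) + e = d := by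
    rw [zdeg_eq_natDegree hp]; norm_cast
  funext j
  simp only [hcoeff j, hcond]
  split_ifs <;> rfl

end Field

section PredictableDegree

variable {K : Type*} [Field K] {n m : ℕ}

theorem sdeg_eq_sup_filter_natDegree (t : Fin n → ℤ) (v : Fin n → K[X]) :
    sdeg t v = (Finset.univ.filter fun i => v i ≠ 0).sup
      fun i => ((((v i).natDegree : ℤ) + t i : ℤ) : WithBot ℤ) := by
  have hterm : ∀ i, zdeg (v i) + (t i : WithBot ℤ) =
      if v i ≠ 0 then ((((v i).natDegree : ℤ) + t i : ℤ) : WithBot ℤ) else ⊥ := by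
    intro i
    split_ifs with hi
    · rw [zdeg_eq_natDegree hi, WithBot.coe_add]
    · simp [not_not.mp hi, zdeg]
  simp only [sdeg, hterm, Finset.sup_ite, Finset.sup_bot, sup_bot_eq]

theorem sdeg_vecMul_of_linearIndependent {s : Fin m → ℤ} {A : Matrix (Fin n) (Fin m) K[X]}
    {ds : Fin n → ℤ} (hA : ∀ i, sdeg s (A i) ≤ ds i)
    (hred : LinearIndependent K fun i => shiftedCoeff s (A i) (ds i)) (v : Fin n → K[X]) :
    sdeg s (v ᵥ* A) = sdeg ds v := by
  have hle : ∀ i, zdeg (v i) + ds i ≤ sdeg ds v := fun i =>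
    Finset.le_sup (f := fun i => zdeg (v i) + (ds i : WithBot ℤ)) (Finset.mem_univ i)
  have hcoeff : ∀ d : ℤ, sdeg ds v ≤ d → shiftedCoeff s (v ᵥ* A) d =
      ∑ i, (if zdeg (v i) + ds i = d then (v i).leadingCoeff else 0) • shiftedCoeff s (A i) (ds i) := by
    intro d hd
    rw [vecMul_eq_sum, shiftedCoeff_sum]
    refine Finset.sum_congr rfl fun i _ => ?_
    rw [shiftedCoeff_smul_of_sdeg_le (hA i) ((hle i).trans hd), ite_smul, zero_smul]
  refine le_antisymm (WithBot.forall_le_coe_iff_le.mp fun d hd => ?_) ?_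
  · refine sdeg_le_of_forall_lt_shiftedCoeff_eq_zero fun t ht => ?_
    rw [hcoeff t (hd.trans (WithBot.coe_le_coe.mpr ht.le))]
    refine Finset.sum_eq_zero fun i _ => ?_
    rw [if_neg ((hle i).trans hd |>.trans_lt (WithBot.coe_lt_coe.mpr ht)).ne, zero_smul]
  · induction hD : sdeg ds v using WithBot.recBotCoe with
    | bot => exact bot_le
    | coe D =>
      have hne : (Finset.univ : Finset (Fin n)).Nonempty := by
        by_contra h
        simp [sdeg, Finset.not_nonempty_iff_eq_empty.mp h] at hD
      obtain ⟨i₀, -, hi₀⟩ := Finset.exists_mem_eq_sup _ hne fun i => zdeg (v i) + (ds i : WithBot ℤ)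
      rw [← sdeg, hD] at hi₀
      have hv₀ : v i₀ ≠ 0 := by
        rintro h
        simp [h, zdeg] at hi₀
      refine le_sdeg_of_shiftedCoeff_ne_zero fun h => hv₀ (leadingCoeff_eq_zero.mp ?_)
      rw [hcoeff D hD.le] at h
      simpa [hi₀] using Fintype.linearIndependent_iff.mp hred _ h i₀

end PredictableDegree

theorem stmt14_general {K : Type*} [Field K] {n m : ℕ} (s : Fin m → ℤ)
    (A : Matrix (Fin n) (Fin m) K[X]) (ds : Fin n → ℤ)
    (hds : ∀ i, (ds i : WithBot ℤ) = sdeg s (A i))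
    (hred : LinearIndependent K (fun i (j : Fin m) =>
      if ds i - s j < 0 then (0 : K) else (A i j).coeff (ds i - s j).toNat))
    (v : Fin n → K[X]) :
    sdeg s (v ᵥ* A) =
      (Finset.univ.filter fun i => v i ≠ 0).sup
        fun i => ((((v i).natDegree : ℤ) + ds i : ℤ) : WithBot ℤ) := by
  rw [← sdeg_eq_sup_filter_natDegree]
  exact sdeg_vecMul_of_linearIndependent (fun i => (hds i).ge) hred v

/-- Shifted predictable degree property: if `A` is `s`-row reduced with `s`-row degrees
`ds` (the rows of the `s`-leading matrix are linearly independent over `K`, so `A` has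
full row rank), then for every nonzero `v`, `deg_s (v·A) = max_{i : v_i ≠ 0} (deg v_i + ds_i)`. -/
theorem stmt14 {K : Type*} [Field K] {n m : ℕ} (s : Fin m → ℤ)
    (A : Matrix (Fin n) (Fin m) K[X]) (ds : Fin n → ℤ)
    (hds : ∀ i, (ds i : WithBot ℤ) = sdeg s (A i))
    (hred : LinearIndependent K (fun i (j : Fin m) =>
      if ds i - s j < 0 then (0 : K) else (A i j).coeff (ds i - s j).toNat))
    (v : Fin n → K[X]) (hv : v ≠ 0) :
    sdeg s (v ᵥ* A) =
      (Finset.univ.filter fun i => v i ≠ 0).sup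
        fun i => ((((v i).natDegree : ℤ) + ds i : ℤ) : WithBot ℤ) :=
  stmt14_general s A ds hds hred v

end
end

section
/- Let d ≥ 0, S_1,...,S_n ∈ K[x], and let G be an approximant basis of order d of the column vector B = (1, S_1,...,S_n)^T with det G = x^d. Let Â ∈ K[x]^{(n+1)×(n+1)} be the matrix with first row (x^d, -S_1,...,-S_n) and I_n in the lower-right block. Then adj(G^T) is an approximant basis of order d of Â; that is, adj(G^T)·Â ≡ 0 (mod x^d), and the row space of adj(G^T) is exactly the module of order-d approximants of Â. -/
open Polynomial Matrix

lemma eq_mul_divByMonic17 {K : Type*} [Field K] {d : ℕ} {p : K[X]}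
    (h : (X : K[X]) ^ d ∣ p) : p = X ^ d * (p /ₘ X ^ d) := by
  conv_lhs => rw [← Polynomial.modByMonic_add_div p (X ^ d)]
  rw [(Polynomial.modByMonic_eq_zero_iff_dvd (monic_X_pow d)).2 h, zero_add]

lemma vecMul_smul_right17 {K : Type*} [Field K] {n : ℕ} (a : K[X])
    (v : Fin n → K[X]) (M : Matrix (Fin n) (Fin n) K[X]) :
    v ᵥ* (a • M) = a • (v ᵥ* M) := by
  ext j
  simp [Matrix.vecMul, dotProduct, Finset.mul_sum, mul_left_comm]

/-- `B̂`: first column `(1, S_1, ..., S_n)ᵀ`, `x^d`-scaled identity in the lower-right block. -/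
noncomputable def Bhat17 {K : Type*} [Field K] {n : ℕ} (d : ℕ) (S : Fin n → K[X]) :
    Matrix (Fin (n + 1)) (Fin (n + 1)) K[X] :=
  Matrix.of fun i => Fin.cons ((Fin.cons 1 S : Fin (n + 1) → K[X]) i)
    (fun k => if i = k.succ then (X : K[X]) ^ d else 0)


lemma AhatT_mul_Bhat17 {K : Type*} [Field K] {n : ℕ} (d : ℕ) (S : Fin n → K[X]) :
    (Ahat d S)ᵀ * Bhat17 d S = ((X : K[X]) ^ d) • 1 := by
  refine Matrix.ext fun i j => ?_
  rw [Matrix.mul_apply]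
  refine Fin.cases ?_ (fun m => ?_) i <;> refine Fin.cases ?_ (fun l => ?_) j <;>
    simp [Ahat, Bhat17, Fin.sum_univ_succ, Matrix.one_apply, Fin.succ_inj,
      (Fin.succ_ne_zero _).symm, Fin.succ_ne_zero, ite_mul, mul_ite, Finset.sum_ite_eq,
      Finset.sum_ite_eq', eq_comm]

lemma det_Bhat17 {K : Type*} [Field K] {n : ℕ} (d : ℕ) (S : Fin n → K[X]) :
    (Bhat17 d S).det = (X : K[X]) ^ (d * n) := by
  rw [Matrix.det_of_lowerTriangular (Bhat17 d S) ?_]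
  · rw [Fin.prod_univ_succ]
    simp [Bhat17, pow_mul]
  · intro i j hij
    replace hij : i < j := hij
    rcases Fin.eq_zero_or_eq_succ j with rfl | ⟨k, rfl⟩
    · exact absurd hij (Fin.not_lt_zero i)
    · simp [Bhat17, (hij.ne : i ≠ k.succ)]

/-- Duality: if `G` is an order-`d` approximant basis of `B = (1, S_1,...,S_n)ᵀ` with
`det G = x^d`, then `adj(Gᵀ)` is an order-`d` approximant basis of `Â`:
`adj(Gᵀ)·Â ≡ 0 (mod x^d)`, and the row space of `adj(Gᵀ)` is exactly the module of
order-`d` approximants of `Â`. -/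
theorem stmt17 {K : Type*} [Field K] {n : ℕ} (d : ℕ) (S : Fin n → K[X])
    (G : Matrix (Fin (n + 1)) (Fin (n + 1)) K[X]) (hdet : G.det = X ^ d)
    (hspan : ∀ p : Fin (n + 1) → K[X],
      (∃ u : Fin (n + 1) → K[X], p = u ᵥ* G) ↔
        (X : K[X]) ^ d ∣ (p 0 + ∑ i : Fin n, p i.succ * S i)) :
    (∀ i j, (X : K[X]) ^ d ∣ ((Gᵀ).adjugate * Ahat d S) i j) ∧
    (∀ p : Fin (n + 1) → K[X],
      (∃ u : Fin (n + 1) → K[X], p = u ᵥ* (Gᵀ).adjugate) ↔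
        ∀ j, (X : K[X]) ^ d ∣ (p ᵥ* Ahat d S) j) := by
  have hXne : (X : K[X]) ≠ 0 := X_ne_zero
  set A := Ahat d S with hAdef
  set B := Bhat17 d S with hBdef
  -- every entry of G * B is divisible by X^d
  have hdvd : ∀ i j, (X : K[X]) ^ d ∣ (G * B) i j := by
    intro i j
    refine Fin.cases ?_ (fun l => ?_) j
    · have hrow : (X : K[X]) ^ d ∣ (G i 0 + ∑ k : Fin n, G i k.succ * S k) := by
        refine (hspan (fun j => G i j)).1 ⟨Pi.single i 1, ?_⟩
        ext j
        simp [Matrix.vecMul, dotProduct, Pi.single_apply, ite_mul,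
          Finset.sum_ite_eq]
      have : (G * B) i 0 = G i 0 + ∑ k : Fin n, G i k.succ * S k := by
        rw [Matrix.mul_apply]
        simp [hBdef, Bhat17, Fin.sum_univ_succ]
      rw [this]; exact hrow
    · have : (G * B) i l.succ = X ^ d * G i l.succ := by
        rw [Matrix.mul_apply]
        simp [hBdef, Bhat17, mul_ite, Finset.sum_ite_eq, mul_comm]
      exact ⟨G i l.succ, this⟩
  -- the quotient matrix R
  set R : Matrix (Fin (n + 1)) (Fin (n + 1)) K[X] :=
    Matrix.of fun i j => ((G * B) i j) /ₘ (X ^ d) with hRdef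
  have hGB : G * B = ((X : K[X]) ^ d) • R := by
    refine Matrix.ext fun i j => ?_
    simpa [hRdef, smul_eq_mul] using eq_mul_divByMonic17 (hdvd i j)
  have hdetR : R.det = 1 := by
    have h1 : (G * B).det = (X : K[X]) ^ (d * (n + 1)) := by
      rw [Matrix.det_mul, hdet, hBdef, det_Bhat17, ← pow_add]
      ring_nf
    have h2 : (G * B).det = (X : K[X]) ^ (d * (n + 1)) * R.det := by
      rw [hGB, Matrix.det_smul, ← pow_mul, Fintype.card_fin]
    have h3 := h1.symm.trans h2
    exact (mul_right_eq_self₀.mp h3.symm).resolve_right (pow_ne_zero _ hXne)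
  -- the key identity: adj(R) * G = Aᵀ
  have hAB : Aᵀ * B = ((X : K[X]) ^ d) • 1 := AhatT_mul_Bhat17 d S
  have key : R.adjugate * G = Aᵀ := by
    have hc : ((X : K[X]) ^ (d * n)) • (R.adjugate * G)
        = ((X : K[X]) ^ (d * n)) • Aᵀ := by
      have e1 : ((X : K[X]) ^ (d * n)) • (R.adjugate * G)
          = R.adjugate * ((G * B) * B.adjugate) := by
        rw [Matrix.mul_assoc, Matrix.mul_adjugate, hBdef, det_Bhat17,
          Matrix.mul_smul, Matrix.mul_one, Matrix.mul_smul]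
      have e2 : R.adjugate * ((G * B) * B.adjugate)
          = ((X : K[X]) ^ d) • B.adjugate := by
        rw [hGB, Matrix.smul_mul, Matrix.mul_smul, ← Matrix.mul_assoc,
          Matrix.adjugate_mul, hdetR, one_smul, Matrix.one_mul]
      have e3 : ((X : K[X]) ^ (d * n)) • Aᵀ = ((X : K[X]) ^ d) • B.adjugate := by
        have h4 : Aᵀ * (B * B.adjugate)
            = (((X : K[X]) ^ d) • (1 : Matrix (Fin (n + 1)) (Fin (n + 1)) K[X]))
              * B.adjugate := by
          rw [← Matrix.mul_assoc, hAB]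
        rw [Matrix.mul_adjugate, hBdef, det_Bhat17, Matrix.mul_smul, Matrix.mul_one,
          Matrix.smul_mul, Matrix.one_mul] at h4
        exact h4
      rw [e1, e2, e3]
    refine Matrix.ext fun i j => ?_
    have := congrArg (fun M => M i j) hc
    simp only [Matrix.smul_apply, smul_eq_mul] at this
    exact mul_left_cancel₀ (pow_ne_zero _ hXne) this
  have hAeq : A = Gᵀ * (Rᵀ).adjugate := by
    have := congrArg Matrix.transpose key
    simp only [Matrix.transpose_mul, Matrix.transpose_transpose,
      Matrix.adjugate_transpose] at this
    exact this.symm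
  have hP : (Gᵀ).adjugate * A = ((X : K[X]) ^ d) • (Rᵀ).adjugate := by
    rw [hAeq, ← Matrix.mul_assoc, Matrix.adjugate_mul, Matrix.det_transpose, hdet,
      Matrix.smul_mul, Matrix.one_mul]
  have hadjR : (Rᵀ).adjugate * Rᵀ = 1 := by
    rw [Matrix.adjugate_mul, Matrix.det_transpose, hdetR, one_smul]
  constructor
  · intro i j
    refine ⟨(Rᵀ).adjugate i j, ?_⟩
    have := congrArg (fun M => M i j) hP
    simpa [smul_eq_mul] using this
  · intro p
    constructor
    · rintro ⟨u, rfl⟩ j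
      rw [Matrix.vecMul_vecMul, hP, vecMul_smul_right17]
      exact ⟨(u ᵥ* (Rᵀ).adjugate) j, rfl⟩
    · intro hpd
      set q : Fin (n + 1) → K[X] := fun j => (p ᵥ* A) j /ₘ (X ^ d) with hq
      have hpA : p ᵥ* A = ((X : K[X]) ^ d) • q := by
        funext j
        simpa [hq, smul_eq_mul] using eq_mul_divByMonic17 (hpd j)
      have hARt : A * Rᵀ = Gᵀ := by
        rw [hAeq, Matrix.mul_assoc, hadjR, Matrix.mul_one]
      have h2 : p ᵥ* Gᵀ = ((X : K[X]) ^ d) • (q ᵥ* Rᵀ) := by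
        rw [← hARt, ← Matrix.vecMul_vecMul, hpA, Matrix.smul_vecMul]
      refine ⟨q ᵥ* Rᵀ, ?_⟩
      have hc : ((X : K[X]) ^ d) • p = ((X : K[X]) ^ d) • ((q ᵥ* Rᵀ) ᵥ* (Gᵀ).adjugate) := by
        rw [← Matrix.smul_vecMul, ← h2, Matrix.vecMul_vecMul, Matrix.mul_adjugate,
          Matrix.det_transpose, hdet, vecMul_smul_right17, Matrix.vecMul_one]
      funext j
      have := congrFun hc j
      simp only [Pi.smul_apply, smul_eq_mul] at this
      exact mul_left_cancel₀ (pow_ne_zero _ hXne) this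
end
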